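/- Let s ≥ 0 and r > 1/2. For periodic functions f ∈ H^s(𝕋) and g ∈ H^r(𝕋), the positive-frequency projection of the product f·(P₋g) satisfies ‖P₊(f P₋g)‖_{H^s} ≤ C ‖f‖_{H^s} ‖g‖_{H^r}, where P₊ projects onto positive Fourier modes and P₋ onto negative Fourier modes. -/

import Mathlib

/-!
The `n`-th coefficient of `P₊(f P₋g)` is `c(n) = ∑_{k<0} f̂(n-k) ĝ(k)` for `n ≥ 1`. Since
`0 < n ≤ n - k` there, `⟨n⟩^s ≤ ⟨n-k⟩^s`: the whole weight of the output frequency moves onto `f`.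
Writing `|ĝ(k)| = ⟨k⟩^{-r} · ⟨k⟩^r |ĝ(k)|`, Cauchy–Schwarz in `k` gives
`⟨n⟩^{2s} |c(n)|² ≤ (∑ₖ ⟨k⟩^{-2r}) · ∑ₖ ⟨n-k⟩^{2s} |f̂(n-k)|² ⟨k⟩^{2r} |ĝ(k)|²`,
where the first factor is finite because `2r > 1`, and summed over `n` the second factor
is `‖f‖²_{H^s} ‖g‖²_{H^r}`.
-/

noncomputable section

/-- Japanese bracket of an integer: ⟨m⟩ = √(1 + m²). -/
def jb (m : ℤ) : ℝ := Real.sqrt (1 + (m : ℝ) ^ 2)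

/-- Sobolev H^s norm of a sequence of Fourier coefficients. -/
def hsNorm (s : ℝ) (a : ℤ → ℂ) : ℝ := Real.sqrt (∑' k : ℤ, jb k ^ (2 * s) * ‖a k‖ ^ 2)

/-- Fourier coefficients of P₊(f · (P₋ g)): positive-frequency projection of the
product of f with the negative-frequency part of g. -/
def PpfPmg (f g : ℤ → ℂ) : ℤ → ℂ := fun n =>
  if 0 < n then ∑' k : ℤ, f (n - k) * (if k < 0 then g k else 0) else 0

open Real

lemma one_le_jb (m : ℤ) : 1 ≤ jb m :=
  one_le_sqrt.2 (le_add_of_nonneg_right (sq_nonneg _))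

lemma jb_pos (m : ℤ) : 0 < jb m := one_pos.trans_le (one_le_jb m)

lemma abs_le_jb (m : ℤ) : |(m : ℝ)| ≤ jb m := by
  rw [jb, ← sqrt_sq_eq_abs]
  exact sqrt_le_sqrt (le_add_of_nonneg_left zero_le_one)

lemma jb_le_jb {a b : ℤ} (ha : 0 ≤ a) (hab : a ≤ b) : jb a ≤ jb b := by
  have : (a : ℝ) ^ 2 ≤ (b : ℝ) ^ 2 :=
    pow_le_pow_left₀ (by exact_mod_cast ha) (by exact_mod_cast hab) 2
  exact sqrt_le_sqrt (by linarith)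

lemma jb_rpow_sq (m : ℤ) (a : ℝ) : (jb m ^ a) ^ 2 = jb m ^ (2 * a) := by
  rw [← rpow_mul_natCast (jb_pos m).le, mul_comm]
  norm_num

lemma summable_jb_rpow_neg {p : ℝ} (hp : 1 < p) : Summable fun k : ℤ => jb k ^ (-p) := by
  refine (summable_abs_int_rpow hp).of_norm_bounded_eventually ?_
  filter_upwards [(Set.finite_singleton (0 : ℤ)).compl_mem_cofinite] with k hk
  rw [norm_of_nonneg (rpow_pos_of_pos (jb_pos k) _).le]
  exact rpow_le_rpow_of_nonpos (abs_pos.2 (Int.cast_ne_zero.2 hk)) (abs_le_jb k) (by linarith)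

def weightedNorm (s : ℝ) (a : ℤ → ℂ) (k : ℤ) : ℝ := jb k ^ s * ‖a k‖

lemma weightedNorm_nonneg (s : ℝ) (a : ℤ → ℂ) (k : ℤ) : 0 ≤ weightedNorm s a k :=
  mul_nonneg (rpow_pos_of_pos (jb_pos k) s).le (norm_nonneg _)

lemma weightedNorm_sq (s : ℝ) (a : ℤ → ℂ) (k : ℤ) :
    weightedNorm s a k ^ 2 = jb k ^ (2 * s) * ‖a k‖ ^ 2 := by
  rw [weightedNorm, mul_pow, jb_rpow_sq]

lemma hsNorm_eq_sqrt_tsum_weightedNorm_sq (s : ℝ) (a : ℤ → ℂ) :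
    hsNorm s a = √(∑' k, weightedNorm s a k ^ 2) := by
  simp only [hsNorm, weightedNorm_sq]

lemma exists_hasSum_mul_le_sqrt_mul_sqrt {ι : Type*} {u v : ι → ℝ} (hu0 : ∀ i, 0 ≤ u i)
    (hv0 : ∀ i, 0 ≤ v i) (hu : Summable fun i => u i ^ 2) (hv : Summable fun i => v i ^ 2) :
    ∃ C ≤ √(∑' i, u i ^ 2) * √(∑' i, v i ^ 2), HasSum (fun i => u i * v i) C := by
  have hsq {w : ι → ℝ} (hw : Summable fun i => w i ^ 2) :
      HasSum (fun i => w i ^ (2 : ℝ)) (√(∑' i, w i ^ 2) ^ (2 : ℝ)) := by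
    simp only [rpow_two, sq_sqrt (tsum_nonneg fun i => sq_nonneg (w i))]
    exact hw.hasSum
  obtain ⟨C, -, hC, hsum⟩ := inner_le_Lp_mul_Lq_hasSum_of_nonneg HolderConjugate.two_two
    (sqrt_nonneg _) (sqrt_nonneg _) hu0 hv0 (hsq hu) (hsq hv)
  exact ⟨C, hC, hsum⟩

lemma hasSum_tsum_sub_mul {G : Type*} [AddCommGroup G] {u v : G → ℝ} (hu0 : ∀ k, 0 ≤ u k)
    (hv0 : ∀ k, 0 ≤ v k) (hu : Summable u) (hv : Summable v) :
    (∀ n, Summable fun k => u (n - k) * v k) ∧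
      HasSum (fun n => ∑' k, u (n - k) * v k) ((∑' k, u k) * ∑' k, v k) := by
  let e : G × G ≃ G × G :=
    { toFun := fun p => (p.1 - p.2, p.2)
      invFun := fun p => (p.1 + p.2, p.2)
      left_inv := fun p => by simp
      right_inv := fun p => by simp }
  have hprod : HasSum (fun p : G × G => u (p.1 - p.2) * v p.2) ((∑' k, u k) * ∑' k, v k) :=
    e.hasSum_iff.2 (hu.hasSum.mul hv.hasSum (hu.mul_of_nonneg hv hu0 hv0))
  have hfib := ((summable_prod_of_nonneg fun p => mul_nonneg (hu0 _) (hv0 _)).1 hprod.summable).1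
  exact ⟨hfib, hprod.prod_fiberwise fun n => (hfib n).hasSum⟩

lemma jb_rpow_mul_norm_mul_le {s r : ℝ} (hs : 0 ≤ s) (f g : ℤ → ℂ) {n : ℤ} (hn : 0 < n) (k : ℤ) :
    jb n ^ s * ‖f (n - k) * (if k < 0 then g k else 0)‖ ≤
      jb k ^ (-r) * (weightedNorm s f (n - k) * weightedNorm r g k) := by
  split_ifs with hk
  · have hjb : jb k ^ (-r) * jb k ^ r = 1 := by
      rw [rpow_neg (jb_pos k).le, inv_mul_cancel₀ (rpow_pos_of_pos (jb_pos k) r).ne']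
    calc jb n ^ s * ‖f (n - k) * g k‖ = jb n ^ s * ‖f (n - k)‖ * ‖g k‖ := by
          rw [norm_mul, mul_assoc]
      _ ≤ jb (n - k) ^ s * ‖f (n - k)‖ * ‖g k‖ := by
          gcongr
          · exact (jb_pos n).le
          · exact jb_le_jb hn.le (by omega)
      _ = jb k ^ (-r) * (weightedNorm s f (n - k) * weightedNorm r g k) := by
          rw [weightedNorm, weightedNorm]
          linear_combination (jb (n - k) ^ s * ‖f (n - k)‖ * ‖g k‖) * hjb.symm
  · simpa using mul_nonneg (rpow_pos_of_pos (jb_pos k) (-r)).le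
      (mul_nonneg (weightedNorm_nonneg s f (n - k)) (weightedNorm_nonneg r g k))

lemma weightedNorm_PpfPmg_sq_le {s r : ℝ} (hs : 0 ≤ s) {f g : ℤ → ℂ}
    (hK : Summable fun k : ℤ => jb k ^ (-(2 * r))) (n : ℤ)
    (hT : Summable fun k => weightedNorm s f (n - k) ^ 2 * weightedNorm r g k ^ 2) :
    weightedNorm s (PpfPmg f g) n ^ 2 ≤
      (∑' k : ℤ, jb k ^ (-(2 * r))) *
        ∑' k, weightedNorm s f (n - k) ^ 2 * weightedNorm r g k ^ 2 := by
  have hK0 : 0 ≤ ∑' k : ℤ, jb k ^ (-(2 * r)) :=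
    tsum_nonneg fun k => (rpow_pos_of_pos (jb_pos k) _).le
  have hT0 : 0 ≤ ∑' k, weightedNorm s f (n - k) ^ 2 * weightedNorm r g k ^ 2 :=
    tsum_nonneg fun k => mul_nonneg (sq_nonneg _) (sq_nonneg _)
  by_cases hn : 0 < n
  · obtain ⟨C, hC, hsum⟩ := exists_hasSum_mul_le_sqrt_mul_sqrt
      (u := fun k => jb k ^ (-r)) (v := fun k => weightedNorm s f (n - k) * weightedNorm r g k)
      (fun k => (rpow_pos_of_pos (jb_pos k) _).le)
      (fun k => mul_nonneg (weightedNorm_nonneg _ _ _) (weightedNorm_nonneg _ _ _))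
      (by simpa only [jb_rpow_sq, mul_neg] using hK) (by simpa only [mul_pow] using hT)
    simp only [jb_rpow_sq, mul_neg, mul_pow] at hC
    have hbound : weightedNorm s (PpfPmg f g) n ≤ C := by
      have hjb := (rpow_pos_of_pos (jb_pos n) s).le
      rw [weightedNorm, PpfPmg, if_pos hn, ← Complex.norm_of_nonneg hjb, ← norm_mul,
        ← tsum_mul_left]
      refine tsum_of_norm_bounded hsum fun k => ?_
      rw [norm_mul, Complex.norm_of_nonneg hjb]
      exact jb_rpow_mul_norm_mul_le hs f g hn k
    calc weightedNorm s (PpfPmg f g) n ^ 2 ≤ (√(∑' k : ℤ, jb k ^ (-(2 * r))) *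
          √(∑' k, weightedNorm s f (n - k) ^ 2 * weightedNorm r g k ^ 2)) ^ 2 :=
          pow_le_pow_left₀ (weightedNorm_nonneg _ _ _) (hbound.trans hC) 2
      _ = _ := by rw [mul_pow, sq_sqrt hK0, sq_sqrt hT0]
  · simpa [weightedNorm, PpfPmg, hn] using mul_nonneg hK0 hT0

/-- ‖P₊(f P₋g)‖_{H^s} ≤ C ‖f‖_{H^s} ‖g‖_{H^r} for s ≥ 0, r > 1/2. -/
theorem stmt_1 (s r : ℝ) (hs : 0 ≤ s) (hr : 1 / 2 < r) :
    ∃ C > 0, ∀ f g : ℤ → ℂ,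
      Summable (fun k : ℤ => jb k ^ (2 * s) * ‖f k‖ ^ 2) →
      Summable (fun k : ℤ => jb k ^ (2 * r) * ‖g k‖ ^ 2) →
      Summable (fun n : ℤ => jb n ^ (2 * s) * ‖PpfPmg f g n‖ ^ 2) ∧
      hsNorm s (PpfPmg f g) ≤ C * hsNorm s f * hsNorm r g := by
  have hK : Summable fun k : ℤ => jb k ^ (-(2 * r)) := summable_jb_rpow_neg (by linarith)
  set K := ∑' k : ℤ, jb k ^ (-(2 * r))
  have hKpos : 0 < K :=
    hK.tsum_pos (fun k => (rpow_pos_of_pos (jb_pos k) _).le) 0 (rpow_pos_of_pos (jb_pos 0) _)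
  refine ⟨√K, sqrt_pos.2 hKpos, fun f g hf hg => ?_⟩
  simp only [← weightedNorm_sq] at hf hg ⊢
  obtain ⟨hfib, hconv⟩ := hasSum_tsum_sub_mul (fun _ => sq_nonneg _) (fun _ => sq_nonneg _) hf hg
  have hpt n := weightedNorm_PpfPmg_sq_le hs hK n (hfib n)
  have hsum := Summable.of_nonneg_of_le (fun _ => sq_nonneg _) hpt (hconv.summable.mul_left K)
  refine ⟨hsum, ?_⟩
  calc hsNorm s (PpfPmg f g)
      ≤ √(K * ((∑' k, weightedNorm s f k ^ 2) * ∑' k, weightedNorm r g k ^ 2)) := by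
        rw [hsNorm_eq_sqrt_tsum_weightedNorm_sq, ← hconv.tsum_eq, ← tsum_mul_left]
        exact sqrt_le_sqrt (hsum.tsum_le_tsum hpt (hconv.summable.mul_left K))
    _ = √K * hsNorm s f * hsNorm r g := by
        rw [sqrt_mul hKpos.le, sqrt_mul (tsum_nonneg fun _ => sq_nonneg _),
          hsNorm_eq_sqrt_tsum_weightedNorm_sq, hsNorm_eq_sqrt_tsum_weightedNorm_sq, mul_assoc]
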